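/- arXiv:2212.10195 — 3 statements merged into one kernel-verified Lean document; each statement's English description precedes it below -/
import Mathlib

section
/- For every quaternion q there exists a unique complex number λ with nonnegative imaginary part such that q is similar to λ (i.e., there exists a nonzero quaternion h with q = h⁻¹ λ h). -/
open Quaternion Matrix

noncomputable section

/-- The copy of a complex number inside the quaternions (span of 1 and i). -/
def toQ (z : ℂ) : ℍ[ℝ] := ⟨z.re, z.im, 0, 0⟩

/-- First complex component of a quaternion: a = c1 a + (c2 a)·j. -/
def c1 (a : ℍ[ℝ]) : ℂ := ⟨a.re, a.imI⟩
/-- Second complex component of a quaternion. -/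
def c2 (a : ℍ[ℝ]) : ℂ := ⟨a.imJ, a.imK⟩

/-- Similarity of quaternions: p = h⁻¹ q h for some nonzero h. -/
def qSimilar (p q : ℍ[ℝ]) : Prop := ∃ h : ℍ[ℝ], h ≠ 0 ∧ p = h⁻¹ * q * h

/-- q is a right eigenvalue of A. -/
def RightEig {n : ℕ} (A : Matrix (Fin n) (Fin n) ℍ[ℝ]) (q : ℍ[ℝ]) : Prop :=
  ∃ x : Fin n → ℍ[ℝ], x ≠ 0 ∧ A.mulVec x = fun i => x i * q

/-- The complex adjoint matrix of a quaternion matrix. -/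
def fAdj {n : ℕ} (A : Matrix (Fin n) (Fin n) ℍ[ℝ]) :
    Matrix (Fin n ⊕ Fin n) (Fin n ⊕ Fin n) ℂ :=
  Matrix.fromBlocks (A.map c1) (A.map c2)
    (-(A.map (fun a => starRingEnd ℂ (c2 a)))) (A.map (fun a => starRingEnd ℂ (c1 a)))

/-- Algebraic multiplicity of an eigenvalue of a complex matrix. -/
def algMult {m : Type*} [Fintype m] [DecidableEq m] (B : Matrix m m ℂ) (μ : ℂ) : ℕ :=
  (Matrix.charpoly B).rootMultiplicity μ

/-- Geometric multiplicity of an eigenvalue of a complex matrix. -/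
def geoMult {m : Type*} [Fintype m] [DecidableEq m] (B : Matrix m m ℂ) (μ : ℂ) : ℕ :=
  Module.finrank ℂ (LinearMap.ker (Matrix.mulVecLin (B - μ • 1)))

/-- The set of right q-eigenvectors (with 0). -/
def eigSet {n : ℕ} (A : Matrix (Fin n) (Fin n) ℍ[ℝ]) (q : ℍ[ℝ]) : Set (Fin n → ℍ[ℝ]) :=
  {x | A.mulVec x = fun i => x i * q}


/-- The [q]-eigenspace as a right ℍ-subspace of ℍⁿ. -/
def Vclass {n : ℕ} (A : Matrix (Fin n) (Fin n) ℍ[ℝ]) (q : ℍ[ℝ]) :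
    Submodule ℍ[ℝ]ᵐᵒᵖ (Fin n → ℍ[ℝ]) :=
  Submodule.span ℍ[ℝ]ᵐᵒᵖ (⋃ q' ∈ {p | qSimilar p q}, eigSet A q')

/-- geometric multiplicity -/
def gm {n : ℕ} (A : Matrix (Fin n) (Fin n) ℍ[ℝ]) (q : ℍ[ℝ]) : ℕ :=
  Module.finrank ℍ[ℝ]ᵐᵒᵖ (Vclass A q)


/-!
Similarity preserves the real part and the norm, and a complex number `l` with `0 ≤ l.im` is
determined by these two. Conversely, write `q = r + a` with `a` pure imaginary and let
`b = |a| i`. Pure imaginary quaternions square to minus their squared norm, so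
`(a + b) a = b (a + b)`, and `a + b` conjugates `q` to `r + |a| i`; if `a + b = 0` then `q`
is the complex number `r - |a| i`, which `j` conjugates to its complex conjugate.
-/

open Quaternion

lemma Quaternion.re_mul_comm (a b : ℍ[ℝ]) : (a * b).re = (b * a).re := by
  simp only [re_mul]; ring

lemma qSimilar_of_mul_eq {p q h : ℍ[ℝ]} (hh : h ≠ 0) (he : h * p = q * h) : qSimilar p q :=
  ⟨h, hh, by rw [mul_assoc, ← he, ← mul_assoc, inv_mul_cancel₀ hh, one_mul]⟩

lemma qSimilar.re_eq {p q : ℍ[ℝ]} (h : qSimilar p q) : p.re = q.re := by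
  obtain ⟨h, hh, rfl⟩ := h
  rw [re_mul_comm (h⁻¹ * q) h, ← mul_assoc, mul_inv_cancel₀ hh, one_mul]

lemma qSimilar.normSq_eq {p q : ℍ[ℝ]} (h : qSimilar p q) : normSq p = normSq q := by
  obtain ⟨h, hh, rfl⟩ := h
  have hn : normSq h ≠ 0 := normSq_ne_zero.mpr hh
  rw [map_mul, map_mul, map_inv₀]
  field_simp

lemma Quaternion.add_mul_self_eq_mul_add {a b : ℍ[ℝ]} (ha : a.re = 0) (hb : b.re = 0)
    (hn : normSq a = normSq b) : (a + b) * a = b * (a + b) := by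
  have ha2 : a * a = -normSq a := by rw [← sq, sq_eq_neg_normSq.mpr ha]
  have hb2 : b * b = -normSq b := by rw [← sq, sq_eq_neg_normSq.mpr hb]
  rw [add_mul, mul_add, ha2, hb2, hn, add_comm]

lemma Quaternion.mul_eq_mul_of_im {p q h : ℍ[ℝ]} (hre : p.re = q.re)
    (him : h * p.im = q.im * h) : h * p = q * h := by
  rw [← re_add_im p, ← re_add_im q, mul_add, add_mul, him, hre, coe_commutes]

@[simp] lemma toQ_re (z : ℂ) : (toQ z).re = z.re := rfl
@[simp] lemma toQ_imI (z : ℂ) : (toQ z).imI = z.im := rfl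
@[simp] lemma toQ_imJ (z : ℂ) : (toQ z).imJ = 0 := rfl
@[simp] lemma toQ_imK (z : ℂ) : (toQ z).imK = 0 := rfl

lemma normSq_toQ (z : ℂ) : normSq (toQ z) = Complex.normSq z := by
  simp [normSq_def', Complex.normSq_apply, sq]

def quatJ : ℍ[ℝ] := ⟨0, 0, 1, 0⟩

@[simp] lemma quatJ_re : quatJ.re = 0 := rfl
@[simp] lemma quatJ_imI : quatJ.imI = 0 := rfl
@[simp] lemma quatJ_imJ : quatJ.imJ = 1 := rfl
@[simp] lemma quatJ_imK : quatJ.imK = 0 := rfl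

lemma quatJ_ne_zero : quatJ ≠ 0 := fun h => by simpa using congrArg QuaternionAlgebra.imJ h

lemma quatJ_mul_toQ (z : ℂ) : quatJ * toQ z = toQ (starRingEnd ℂ z) * quatJ := by
  apply Quaternion.ext <;> simp

lemma qSimilar_toQ_conj (z : ℂ) : qSimilar (toQ (starRingEnd ℂ z)) (toQ z) :=
  qSimilar_of_mul_eq quatJ_ne_zero (by rw [quatJ_mul_toQ, Complex.conj_conj])

lemma Complex.eq_of_re_eq_of_normSq_eq {z w : ℂ} (hre : z.re = w.re)
    (hn : Complex.normSq z = Complex.normSq w) (hz : 0 ≤ z.im) (hw : 0 ≤ w.im) : z = w := by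
  rw [Complex.normSq_apply, Complex.normSq_apply, hre] at hn
  refine Complex.ext hre ?_
  nlinarith

def complexRep (q : ℍ[ℝ]) : ℂ := ⟨q.re, √(normSq q.im)⟩

lemma complexRep_im_nonneg (q : ℍ[ℝ]) : 0 ≤ (complexRep q).im := Real.sqrt_nonneg _

lemma normSq_im_toQ_complexRep (q : ℍ[ℝ]) :
    normSq (toQ (complexRep q)).im = normSq q.im := by
  rw [normSq_def' (toQ _).im]
  simp [complexRep, Real.sq_sqrt normSq_nonneg]

lemma qSimilar_toQ_complexRep (q : ℍ[ℝ]) : qSimilar q (toQ (complexRep q)) := by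
  set b := (toQ (complexRep q)).im
  by_cases h0 : q.im + b = 0
  · have hq : q = toQ (starRingEnd ℂ (complexRep q)) := by
      conv_lhs => rw [← re_add_im q, eq_neg_of_add_eq_zero_left h0]
      apply Quaternion.ext <;> simp [b, complexRep]
    nth_rw 1 [hq]
    exact qSimilar_toQ_conj _
  · refine qSimilar_of_mul_eq h0 (mul_eq_mul_of_im rfl ?_)
    exact add_mul_self_eq_mul_add (re_im q) (re_im _) (normSq_im_toQ_complexRep q).symm

/-- Every quaternion is similar to a unique complex number with nonnegative imaginary part. -/
theorem exists_unique_complex_representative (q : ℍ[ℝ]) :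
    ∃! l : ℂ, 0 ≤ l.im ∧ qSimilar q (toQ l) := by
  refine ⟨complexRep q, ⟨complexRep_im_nonneg q, qSimilar_toQ_complexRep q⟩, ?_⟩
  rintro l ⟨hl, hsim⟩
  have hrep := qSimilar_toQ_complexRep q
  refine Complex.eq_of_re_eq_of_normSq_eq ?_ ?_ hl (complexRep_im_nonneg q)
  · rw [← toQ_re, ← toQ_re, ← hsim.re_eq, hrep.re_eq]
  · rw [← normSq_toQ, ← normSq_toQ, ← hsim.normSq_eq, hrep.normSq_eq]
end
end

section
/- A complex number λ is an eigenvalue of the complex adjoint matrix f(A) if and only if λ (viewed as a quaternion) is similar to some right eigenvalue q of A. In other words, Spec(f(A)) = {λ ∈ ℂ : [λ] = [q] for some q ∈ σ_r(A)}. -/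
open Quaternion Matrix

noncomputable section

/-!
Writing `x = x₁ + x₂ j`, the map `x ↦ (x₁, -conj x₂)` is an additive bijection `ℍⁿ → ℂ²ⁿ` that
turns `A` into `f(A)` and right multiplication by a complex `λ` into scaling by `λ`. Hence `λ` is
an eigenvalue of `f(A)` exactly when `λ` itself is a right eigenvalue of `A`. Right eigenvalues
are closed under similarity, since `A x = x q` gives `A (x h) = (x h) (h⁻¹ q h)`.
-/

open ComplexConjugate

lemma c1_add (a b : ℍ[ℝ]) : c1 (a + b) = c1 a + c1 b := by
  apply Complex.ext <;> simp [c1]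

lemma c2_add (a b : ℍ[ℝ]) : c2 (a + b) = c2 a + c2 b := by
  apply Complex.ext <;> simp [c2]

lemma c1_mul (a b : ℍ[ℝ]) : c1 (a * b) = c1 a * c1 b - c2 a * conj (c2 b) := by
  apply Complex.ext <;> simp [c1, c2, Complex.mul_re, Complex.mul_im] <;> ring

lemma c2_mul (a b : ℍ[ℝ]) : c2 (a * b) = c1 a * c2 b + c2 a * conj (c1 b) := by
  apply Complex.ext <;> simp [c1, c2, Complex.mul_re, Complex.mul_im] <;> ring

lemma c1_toQ (z : ℂ) : c1 (toQ z) = z := rfl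

lemma c2_toQ (z : ℂ) : c2 (toQ z) = 0 := rfl

section ComplexVec

variable {ι : Type*}

lemma c1_sum (s : Finset ι) (f : ι → ℍ[ℝ]) : c1 (∑ i ∈ s, f i) = ∑ i ∈ s, c1 (f i) :=
  map_sum (AddMonoidHom.mk' c1 c1_add) f s

lemma c2_sum (s : Finset ι) (f : ι → ℍ[ℝ]) : c2 (∑ i ∈ s, f i) = ∑ i ∈ s, c2 (f i) :=
  map_sum (AddMonoidHom.mk' c2 c2_add) f s

/-- The second block is `-conj x₂` rather than `x₂` so that `fAdj A` acts on these coordinates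
as `A` does on `x` (see `fAdj_mulVec_complexVec`). -/
def complexVec : (ι → ℍ[ℝ]) ≃+ (ι ⊕ ι → ℂ) where
  toFun x := Sum.elim (fun i => c1 (x i)) (fun i => -conj (c2 (x i)))
  invFun v i := ⟨(v (.inl i)).re, (v (.inl i)).im, -(v (.inr i)).re, (v (.inr i)).im⟩
  left_inv x := by funext i; ext <;> simp [c1, c2]
  right_inv v := by funext j; rcases j with i | i <;> apply Complex.ext <;> simp [c1, c2]
  map_add' x y := by funext j; rcases j with i | i <;> simp [c1_add, c2_add]; ring

@[simp]
lemma complexVec_inl (x : ι → ℍ[ℝ]) (i : ι) : complexVec x (.inl i) = c1 (x i) := rfl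

@[simp]
lemma complexVec_inr (x : ι → ℍ[ℝ]) (i : ι) : complexVec x (.inr i) = -conj (c2 (x i)) := rfl

lemma complexVec_mul_toQ (x : ι → ℍ[ℝ]) (z : ℂ) :
    complexVec (fun i => x i * toQ z) = z • complexVec x := by
  funext j
  rcases j with i | i <;> simp [c1_mul, c2_mul, c1_toQ, c2_toQ, mul_comm]

end ComplexVec

section Eigen

variable {n : ℕ}

lemma fAdj_mulVec_complexVec (A : Matrix (Fin n) (Fin n) ℍ[ℝ]) (x : Fin n → ℍ[ℝ]) :
    fAdj A *ᵥ complexVec x = complexVec (A *ᵥ x) := by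
  funext j
  rcases j with i | i <;>
  simp [mulVec, dotProduct, fAdj, c1_sum, c2_sum, c1_mul, c2_mul, Finset.sum_add_distrib,
    sub_eq_add_neg]

lemma fAdj_mulVec_complexVec_eq_smul_iff (A : Matrix (Fin n) (Fin n) ℍ[ℝ]) (x : Fin n → ℍ[ℝ])
    (z : ℂ) : fAdj A *ᵥ complexVec x = z • complexVec x ↔ A *ᵥ x = fun i => x i * toQ z := by
  rw [fAdj_mulVec_complexVec, ← complexVec_mul_toQ, EquivLike.apply_eq_iff_eq]

lemma exists_fAdj_eigenvector_iff_rightEig_toQ (A : Matrix (Fin n) (Fin n) ℍ[ℝ]) (z : ℂ) :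
    (∃ v, v ≠ 0 ∧ fAdj A *ᵥ v = z • v) ↔ RightEig A (toQ z) := by
  simp only [complexVec.surjective.exists, ne_eq, map_eq_zero_iff _ complexVec.injective,
    fAdj_mulVec_complexVec_eq_smul_iff, RightEig]

lemma mulVec_mul_right (A : Matrix (Fin n) (Fin n) ℍ[ℝ]) (x : Fin n → ℍ[ℝ]) (h : ℍ[ℝ]) :
    A *ᵥ (fun i => x i * h) = fun i => (A *ᵥ x) i * h := by
  funext i
  simp [mulVec, dotProduct, Finset.sum_mul, mul_assoc]

lemma RightEig.of_qSimilar {A : Matrix (Fin n) (Fin n) ℍ[ℝ]} {p q : ℍ[ℝ]}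
    (hq : RightEig A q) (hpq : qSimilar p q) : RightEig A p := by
  obtain ⟨x, hx0, hx⟩ := hq
  obtain ⟨h, hh, rfl⟩ := hpq
  refine ⟨fun i => x i * h, ?_, ?_⟩
  · obtain ⟨i, hi⟩ := Function.ne_iff.mp hx0
    exact Function.ne_iff.mpr ⟨i, mul_ne_zero hi hh⟩
  · rw [mulVec_mul_right, hx]
    funext i
    simp [mul_assoc, mul_inv_cancel_left₀ hh]

end Eigen

lemma qSimilar_refl (q : ℍ[ℝ]) : qSimilar q q := ⟨1, one_ne_zero, by simp⟩

/-- Spec(f(A)) = { λ ∈ ℂ : [λ] = [q] for some right eigenvalue q of A }. -/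
theorem spec_fAdj_eq_similarity_classes {n : ℕ} (A : Matrix (Fin n) (Fin n) ℍ[ℝ]) :
    ∀ l : ℂ, (∃ v : (Fin n ⊕ Fin n) → ℂ, v ≠ 0 ∧ (fAdj A).mulVec v = l • v) ↔
      ∃ q : ℍ[ℝ], RightEig A q ∧ qSimilar (toQ l) q := by
  intro l
  rw [exists_fAdj_eigenvector_iff_rightEig_toQ]
  exact ⟨fun h => ⟨_, h, qSimilar_refl _⟩, fun ⟨_, hq, hsim⟩ => hq.of_qSimilar hsim⟩
end
end

section
/- Let A ∈ ℍ^{n×n} and q a right eigenvalue with similarity class [q]. The [q]-eigenspace V_{[q]} := Σ_{q̃ ∈ [q]} V_{q̃} (the set of finite sums of eigenvectors for eigenvalues similar to q) is a right ℍ-subspace of ℍⁿ, and for each q̃ ∈ [q] there exists a basis of V_{[q]} (as a right ℍ-vector space) all of whose elements lie in V_{q̃}. -/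
open Quaternion Matrix

noncomputable section

/-! Right multiplication by a nonzero `h` carries `p`-eigenvectors to `h⁻¹ p h`-eigenvectors.
Hence the union of the eigenvector sets over `[q]` is stable under right scalars, so its additive
closure is already its span, and each of its elements is a right multiple of a `q̃`-eigenvector,
so `V_{q̃}` alone spans `V_{[q]}`. A basis is then extracted from `V_{q̃}` inside the
finite-dimensional space `ℍⁿ`. -/

instance Module.Finite.mulOpposite_self (R : Type*) [Semiring R] : Module.Finite Rᵐᵒᵖ R :=
  ⟨⟨{1}, eq_top_iff.2 fun x _ => by
    simpa using Submodule.smul_mem _ (MulOpposite.op x)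
      (Submodule.subset_span (Finset.mem_coe.2 (Finset.mem_singleton_self (1 : R))))⟩⟩

theorem exists_fin_linearIndependent_span_eq {K V : Type*} [DivisionRing K] [AddCommGroup V]
    [Module K V] [Module.Finite K V] (t : Set V) :
    ∃ (d : ℕ) (v : Fin d → V), (∀ i, v i ∈ t) ∧ LinearIndependent K v ∧
      Submodule.span K (Set.range v) = Submodule.span K t := by
  obtain ⟨b, hbt, hspan, hli⟩ := exists_linearIndependent K t
  obtain ⟨d, f, rfl⟩ := hli.setFinite.fin_embedding
  exact ⟨d, f, fun i => hbt ⟨i, rfl⟩, (linearIndepOn_id_range_iff f.injective).1 hli, hspan⟩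

theorem qSimilar_conj_self {h : ℍ[ℝ]} (hh : h ≠ 0) (q : ℍ[ℝ]) : qSimilar (h⁻¹ * q * h) q :=
  ⟨h, hh, rfl⟩

theorem qSimilar.symm {p q : ℍ[ℝ]} (hpq : qSimilar p q) : qSimilar q p := by
  obtain ⟨h, hh, rfl⟩ := hpq
  exact ⟨h⁻¹, inv_ne_zero hh, by simp [mul_assoc, hh]⟩

theorem qSimilar.trans {p q r : ℍ[ℝ]} (hpq : qSimilar p q) (hqr : qSimilar q r) :
    qSimilar p r := by
  obtain ⟨g, hg, rfl⟩ := hpq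
  obtain ⟨h, hh, rfl⟩ := hqr
  exact ⟨h * g, mul_ne_zero hh hg, by simp [_root_.mul_inv_rev, mul_assoc]⟩

section eigSet

variable {n : ℕ} (A : Matrix (Fin n) (Fin n) ℍ[ℝ])

theorem zero_mem_eigSet (p : ℍ[ℝ]) : 0 ∈ eigSet A p := by
  funext i
  simp

theorem op_smul_mem_eigSet {p h : ℍ[ℝ]} (hh : h ≠ 0) {x : Fin n → ℍ[ℝ]} (hx : x ∈ eigSet A p) :
    MulOpposite.op h • x ∈ eigSet A (h⁻¹ * p * h) := by
  have hmul : A *ᵥ (MulOpposite.op h • x) = fun i => (A *ᵥ x) i * h := by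
    funext i
    simp only [Matrix.mulVec, dotProduct, Pi.smul_apply, MulOpposite.smul_eq_mul_unop,
      MulOpposite.unop_op, Finset.sum_mul, mul_assoc]
  funext i
  rw [hmul, hx]
  simp [mul_assoc, hh]

theorem op_smul_mem_eigSet_of_qSimilar {p p' : ℍ[ℝ]} (hp : qSimilar p p') {x : Fin n → ℍ[ℝ]}
    (hx : x ∈ eigSet A p') : ∃ h : ℍ[ℝ], h ≠ 0 ∧ MulOpposite.op h • x ∈ eigSet A p := by
  obtain ⟨h, hh, rfl⟩ := hp
  exact ⟨h, hh, op_smul_mem_eigSet A hh hx⟩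

end eigSet

section Vclass

variable {n : ℕ} (A : Matrix (Fin n) (Fin n) ℍ[ℝ]) (q : ℍ[ℝ])

theorem smul_mem_iUnion_eigSet (c : ℍ[ℝ]ᵐᵒᵖ) {x : Fin n → ℍ[ℝ]}
    (hx : x ∈ ⋃ q' ∈ {p | qSimilar p q}, eigSet A q') :
    c • x ∈ ⋃ q' ∈ {p | qSimilar p q}, eigSet A q' := by
  obtain ⟨q', hq', hx⟩ := Set.mem_iUnion₂.1 hx
  by_cases hc : c = 0
  · rw [hc, zero_smul]
    exact Set.mem_iUnion₂.2 ⟨q', hq', zero_mem_eigSet A q'⟩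
  · have hh : c.unop ≠ 0 := (MulOpposite.unop_ne_zero_iff c).2 hc
    refine Set.mem_iUnion₂.2 ⟨_, (qSimilar_conj_self hh q').trans hq', ?_⟩
    simpa using op_smul_mem_eigSet A hh hx

open scoped Pointwise in
theorem coe_Vclass :
    (Vclass A q : Set (Fin n → ℍ[ℝ])) =
      AddSubmonoid.closure (⋃ q' ∈ {p | qSimilar p q}, eigSet A q') := by
  have hsmul : (Set.univ : Set ℍ[ℝ]ᵐᵒᵖ) • (⋃ q' ∈ {p | qSimilar p q}, eigSet A q') =
      ⋃ q' ∈ {p | qSimilar p q}, eigSet A q' := by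
    refine subset_antisymm ?_ fun x hx => ⟨1, trivial, x, hx, one_smul _ x⟩
    rintro _ ⟨c, -, x, hx, rfl⟩
    exact smul_mem_iUnion_eigSet A q c hx
  rw [Vclass, ← Submodule.coe_toAddSubmonoid, Submodule.span_eq_closure, hsmul]

theorem span_eigSet_eq_Vclass {qt : ℍ[ℝ]} (hqt : qSimilar qt q) :
    Submodule.span ℍ[ℝ]ᵐᵒᵖ (eigSet A qt) = Vclass A q := by
  refine le_antisymm (Submodule.span_mono (Set.subset_biUnion_of_mem (u := eigSet A) hqt)) ?_
  refine Submodule.span_le.2 fun x hx => ?_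
  obtain ⟨q', hq', hx⟩ := Set.mem_iUnion₂.1 hx
  obtain ⟨h, hh, hmem⟩ := op_smul_mem_eigSet_of_qSimilar A (hqt.trans hq'.symm) hx
  exact (Submodule.smul_mem_iff _ ((MulOpposite.op_ne_zero_iff h).2 hh)).1
    (Submodule.subset_span hmem)

end Vclass

theorem Vclass_subspace_and_basis_general {n : ℕ} (A : Matrix (Fin n) (Fin n) ℍ[ℝ])
    (q : ℍ[ℝ]) :
    (∃ W : Submodule ℍ[ℝ]ᵐᵒᵖ (Fin n → ℍ[ℝ]),
      (W : Set (Fin n → ℍ[ℝ])) =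
        (AddSubmonoid.closure (⋃ q' ∈ {p | qSimilar p q}, eigSet A q') :
          AddSubmonoid (Fin n → ℍ[ℝ]))) ∧
    (∀ qt : ℍ[ℝ], qSimilar qt q →
      ∃ (d : ℕ) (v : Fin d → (Fin n → ℍ[ℝ])),
        (∀ i, v i ∈ eigSet A qt) ∧ LinearIndependent ℍ[ℝ]ᵐᵒᵖ v ∧
        Submodule.span ℍ[ℝ]ᵐᵒᵖ (Set.range v) = Vclass A q) := by
  refine ⟨⟨Vclass A q, coe_Vclass A q⟩, fun qt hqt => ?_⟩
  obtain ⟨d, v, hv, hli, hspan⟩ :=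
    exists_fin_linearIndependent_span_eq (K := ℍ[ℝ]ᵐᵒᵖ) (eigSet A qt)
  exact ⟨d, v, hv, hli, hspan.trans (span_eigSet_eq_Vclass A q hqt)⟩

/-- V_{[q]} (the set of finite sums of eigenvectors for eigenvalues similar to q) is a
right ℍ-subspace of ℍⁿ, and for every q̃ ∈ [q] it admits a basis consisting of
q̃-eigenvectors. -/
theorem Vclass_subspace_and_basis {n : ℕ} (A : Matrix (Fin n) (Fin n) ℍ[ℝ])
    (q : ℍ[ℝ]) (hq : RightEig A q) :
    (∃ W : Submodule ℍ[ℝ]ᵐᵒᵖ (Fin n → ℍ[ℝ]),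
      (W : Set (Fin n → ℍ[ℝ])) =
        (AddSubmonoid.closure (⋃ q' ∈ {p | qSimilar p q}, eigSet A q') :
          AddSubmonoid (Fin n → ℍ[ℝ]))) ∧
    (∀ qt : ℍ[ℝ], qSimilar qt q →
      ∃ (d : ℕ) (v : Fin d → (Fin n → ℍ[ℝ])),
        (∀ i, v i ∈ eigSet A qt) ∧ LinearIndependent ℍ[ℝ]ᵐᵒᵖ v ∧
        Submodule.span ℍ[ℝ]ᵐᵒᵖ (Set.range v) = Vclass A q) :=
  Vclass_subspace_and_basis_general A q
end
end
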